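/- Let M = M(Σ,I) be a free partially commutative monoid with Σ finite and totally ordered. Then the sequence ⋯ → F_n →^{δ_n} ⋯ → F_2 →^{δ_2} F_1 →^{δ_1} F_0 = ℤM →^{ε} ℤ → 0 is exact; that is, it is a free resolution of the trivial right ℤM-module ℤ. -/

import Mathlib

open scoped Classical

/-- The elementary commutation relation on words: `ab ~ ba` for `(a,b) ∈ I`. -/
def TraceRel {α : Type*} (I : α → α → Prop) : FreeMonoid α → FreeMonoid α → Prop :=
  fun u v => ∃ a b, I a b ∧ u = FreeMonoid.of a * FreeMonoid.of b ∧
    v = FreeMonoid.of b * FreeMonoid.of a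

/-- The congruence on the free monoid generated by the commutation relation. -/
def TraceCon {α : Type*} (I : α → α → Prop) : Con (FreeMonoid α) := conGen (TraceRel I)

/-- The free partially commutative monoid `M(Σ, I)`: the monoid presented by
generators `Σ` and relations `ab = ba` for `(a,b) ∈ I`. -/
abbrev TraceMonoid (α : Type*) (I : α → α → Prop) : Type _ := (TraceCon I).Quotient

/-- The canonical map `Σ* → M(Σ, I)` sending a word to its class. -/
def TraceMonoid.mk {α : Type*} (I : α → α → Prop) : FreeMonoid α →* TraceMonoid α I :=
  Con.mk' _

/-- The projection `π_A : M(Σ, I) → M(A, I_A)` erasing all letters not in `A`. -/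
noncomputable def TraceMonoid.proj {α : Type*} (I : α → α → Prop) (A : Set α) :
    TraceMonoid α I →* TraceMonoid A (fun a b => I a.1 b.1) :=
  Con.lift _ ((TraceMonoid.mk _).comp (FreeMonoid.lift fun c =>
    if h : c ∈ A then FreeMonoid.of (⟨c, h⟩ : A) else 1)) <| by
    refine Con.conGen_le.2 ?_
    rintro u v ⟨a, b, hI, rfl, rfl⟩
    simp only [Con.ker_rel, map_mul, MonoidHom.comp_apply, FreeMonoid.lift_eval_of]
    by_cases ha : a ∈ A <;> by_cases hb : b ∈ A <;>
      simp only [ha, hb, dif_pos, dif_neg, not_false_iff, map_one, one_mul, mul_one]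
    rw [← map_mul, ← map_mul]
    exact Quotient.sound (ConGen.Rel.of _ _ ⟨⟨a, ha⟩, ⟨b, hb⟩, hI, rfl, rfl⟩)

noncomputable section Resolution

variable {σ : Type*} [LinearOrder σ]

/-- The monoid ring `ℤM` of the free partially commutative monoid `M = M(Σ, I)`. -/
abbrev RM (σ : Type*) (I : σ → σ → Prop) : Type _ := MonoidAlgebra ℤ (TraceMonoid σ I)

/-- The image of a generator `a ∈ Σ` in the monoid ring `ℤM`. -/
def gen (I : σ → σ → Prop) (a : σ) : RM σ I :=
  MonoidAlgebra.of ℤ (TraceMonoid σ I) (TraceMonoid.mk I (FreeMonoid.of a))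

/-- A `k`-clique: a set of `k` distinct pairwise commuting letters of `Σ`
(a complete subgraph with `k` vertices of the graph `Γ(M)`). -/
def Clique (I : σ → σ → Prop) (k : ℕ) : Type _ :=
  {s : Finset σ // s.card = k ∧ (↑s : Set σ).Pairwise I}

/-- `elt c j` is the element `a_{j+1}` of the clique `{a₁ < a₂ < ⋯ < a_k}`. -/
def elt {I : σ → σ → Prop} {k : ℕ} (c : Clique I k) (j : Fin k) : σ :=
  (c.1.orderIsoOfFin c.2.1 j : σ)

theorem elt_mem {I : σ → σ → Prop} {k : ℕ} (c : Clique I k) (j : Fin k) :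
    elt c j ∈ c.1 := (c.1.orderIsoOfFin c.2.1 j).2

/-- The clique obtained by deleting the `(j+1)`-st element. -/
def erased {I : σ → σ → Prop} {k : ℕ} (c : Clique I (k + 1)) (j : Fin (k + 1)) :
    Clique I k :=
  ⟨c.1.erase (elt c j), by
    refine ⟨?_, ?_⟩
    · rw [Finset.card_erase_of_mem (elt_mem c j), c.2.1]
      omega
    · exact Set.Pairwise.mono (by
        intro a ha
        exact Finset.mem_of_mem_erase (by exact_mod_cast ha)) c.2.2⟩

/-- `F_k`, the free right `ℤM`-module with one basis element for each `k`-clique. -/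
abbrev F (I : σ → σ → Prop) (k : ℕ) : Type _ := Clique I k →₀ RM σ I

/-- The boundary homomorphism `δ_{k+1} : F_{k+1} → F_k` of right `ℤM`-modules,
`δ [a₁…a_{k+1}] = Σⱼ (−1)^{j-1} [a₁… â_j …a_{k+1}] (a_j − 1)`. -/
def del (I : σ → σ → Prop) (k : ℕ) : F I (k + 1) →ₗ[(RM σ I)ᵐᵒᵖ] F I k :=
  Finsupp.lsum ℕ fun c => ∑ j : Fin (k + 1),
    (Finsupp.lsingle (erased c j)).comp
      (LinearMap.mulLeft (RM σ I)ᵐᵒᵖ ((-1 : RM σ I) ^ (j : ℕ) * (gen I (elt c j) - 1)))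

/-- The empty clique. -/
def emptyClique (I : σ → σ → Prop) : Clique I 0 := ⟨∅, by simp⟩

/-- The augmentation `ε : F₀ = ℤM → ℤ`, `ε(a) = 1` for every `a ∈ Σ`
(`F₀` is the free module on the single `0`-clique, canonically `ℤM` itself). -/
def aug (I : σ → σ → Prop) : F I 0 → ℤ := fun x =>
  MonoidAlgebra.lift ℤ ℤ (TraceMonoid σ I) 1 (x (emptyClique I))

end Resolution

/-!
The contracting homotopy is read off from left divisibility in `M`. By the projection lemma,
two words represent the same trace iff they are permutations of each other with the same
projection on every pair of non-commuting letters; consequently `M` is left cancellative, and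
the letters `a` with `a ∣ t` pairwise commute, so that the product of any set of them divides `t`.
For a basis element `[c]·t` of `F_k` let `b` be the least letter dividing `c·t`; set
`h([c]·t) = [c ∪ {b}]·m` with `c·t = (c ∪ {b})·m` if `b ∉ c`, and `0` otherwise.
Writing `δ = lead - low`, where `lead` multiplies the deleted letter into the coefficient and
`low` drops it, one checks `lead ∘ h + h ∘ lead = id` on `F_{k+1}`. Since `low` preserves and
`h` lowers the length of the coefficients, a cycle `x` differs from the boundary `δ(h x)` by a
cycle of smaller length, and exactness follows by induction on the length. In degree `0` the
kernel of `ε` is spanned by the elements `t - 1`, which are boundaries.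
-/

noncomputable section

namespace TraceMonoid

variable {α : Type*} {I : α → α → Prop}

def of (I : α → α → Prop) (a : α) : TraceMonoid α I := TraceMonoid.mk I (FreeMonoid.of a)

def ofList (I : α → α → Prop) (w : List α) : TraceMonoid α I :=
  TraceMonoid.mk I (FreeMonoid.ofList w)

theorem ofList_nil : ofList I [] = 1 := rfl

theorem ofList_cons (a : α) (w : List α) : ofList I (a :: w) = of I a * ofList I w :=
  map_mul (TraceMonoid.mk I) (FreeMonoid.of a) (FreeMonoid.ofList w)

theorem ofList_surjective : Function.Surjective (ofList I) :=
  fun t => (Con.mk'_surjective t).imp fun _ hw => hw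

theorem of_commute {a b : α} (h : I a b) : Commute (of I a) (of I b) :=
  (Con.eq _).2 (ConGen.Rel.of _ _ ⟨a, b, h, rfl, rfl⟩)

def length (t : TraceMonoid α I) : ℕ :=
  Multiplicative.toAdd <| (TraceCon I).lift (FreeMonoid.lift fun _ => Multiplicative.ofAdd 1)
    (Con.conGen_le.2 <| by rintro _ _ ⟨a, b, -, rfl, rfl⟩; simp [Con.ker_rel]) t

theorem length_mul (s t : TraceMonoid α I) : length (s * t) = length s + length t :=
  congrArg Multiplicative.toAdd (map_mul _ s t)

theorem length_one : length (1 : TraceMonoid α I) = 0 := rfl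

theorem length_of (a : α) : length (of I a) = 1 := rfl

/-! ### The projection lemma -/

def pairFilter (a b : α) (w : List α) : List α := w.filter fun c => c = a ∨ c = b

def WordEquiv (I : α → α → Prop) (u v : List α) : Prop :=
  u.Perm v ∧ ∀ a b, ¬ I a b → pairFilter a b u = pairFilter a b v

theorem WordEquiv.trans {u v w : List α} (h : WordEquiv I u v) (h' : WordEquiv I v w) :
    WordEquiv I u w :=
  ⟨h.1.trans h'.1, fun a b hab => (h.2 a b hab).trans (h'.2 a b hab)⟩

def wordCon (I : α → α → Prop) : Con (FreeMonoid α) where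
  r u v := WordEquiv I u.toList v.toList
  iseqv := ⟨fun _ => ⟨.refl _, fun _ _ _ => rfl⟩,
    fun h => ⟨h.1.symm, fun a b hab => (h.2 a b hab).symm⟩, .trans⟩
  mul' h h' := ⟨h.1.append h'.1, fun a b hab => by
    simp only [FreeMonoid.toList_mul, pairFilter, List.filter_append]
    exact congrArg₂ _ (h.2 a b hab) (h'.2 a b hab)⟩

theorem traceCon_le_wordCon (hsym : Symmetric I) : TraceCon I ≤ wordCon I :=
  Con.conGen_le.2 <| by
    rintro _ _ ⟨a, b, hab, rfl, rfl⟩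
    refine ⟨List.Perm.swap b a [], fun x y hxy => ?_⟩
    simp only [FreeMonoid.toList_mul, FreeMonoid.toList_of, pairFilter]
    by_cases hba : a = b
    · rw [hba]
    have := hsym hab
    grind

theorem WordEquiv.of_ofList_eq (hsym : Symmetric I) {u v : List α}
    (h : ofList I u = ofList I v) : WordEquiv I u v :=
  traceCon_le_wordCon hsym ((Con.eq _).1 h)

theorem WordEquiv.of_cons {a : α} {u v : List α} (h : WordEquiv I (a :: u) (a :: v)) :
    WordEquiv I u v :=
  ⟨h.1.cons_inv, fun x y hxy => by
    have := h.2 x y hxy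
    by_cases ha : a = x ∨ a = y <;> simpa [pairFilter, List.filter_cons, ha] using this⟩

/-- A letter `z` of `p` with `¬ I z a` would come before `a` in the projection on `{z, a}`. -/
theorem WordEquiv.commute_of_eq_append_cons {a : α} {u p s : List α}
    (h : WordEquiv I (a :: u) (p ++ a :: s)) (ha : a ∉ p) : ∀ z ∈ p, I z a := by
  intro z hz
  by_contra hza
  have hfil := h.2 z a hza
  simp only [pairFilter, List.filter_cons, List.filter_append, or_true, decide_true,
    if_true] at hfil
  rcases List.append_eq_cons_iff.1 hfil.symm with ⟨hp, -⟩ | ⟨p', hp, -⟩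
  · have : z ∈ p.filter fun c => c = z ∨ c = a := List.mem_filter.2 ⟨hz, by simp⟩
    exact List.not_mem_nil (hp ▸ this)
  · have : a ∈ p.filter fun c => c = z ∨ c = a := by rw [hp]; exact List.mem_cons_self
    exact ha (List.mem_filter.1 this).1

theorem ofList_append_cons {p s : List α} {a : α} (h : ∀ z ∈ p, I z a) :
    ofList I (p ++ a :: s) = of I a * ofList I (p ++ s) := by
  induction p with
  | nil => exact ofList_cons a s
  | cons z p ih =>
    rw [List.cons_append, List.cons_append, ofList_cons, ofList_cons,
      ih fun y hy => h y (.tail _ hy), ← mul_assoc, ← mul_assoc,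
      (of_commute (h z List.mem_cons_self)).eq]

theorem WordEquiv.exists_eq_append_cons {a : α} {u v : List α} (hsym : Symmetric I)
    (h : WordEquiv I (a :: u) v) :
    ∃ p s, v = p ++ a :: s ∧ a ∉ p ∧ (∀ z ∈ p, I z a) ∧ WordEquiv I u (p ++ s) := by
  obtain ⟨p, s, rfl, ha⟩ := List.eq_append_cons_of_mem (h.1.subset List.mem_cons_self)
  have hp := h.commute_of_eq_append_cons ha
  refine ⟨p, s, rfl, ha, hp, (h.trans (of_ofList_eq hsym ?_)).of_cons⟩
  rw [ofList_append_cons hp, ofList_cons]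

theorem WordEquiv.ofList_eq (hsym : Symmetric I) {u v : List α} (h : WordEquiv I u v) :
    ofList I u = ofList I v := by
  induction u generalizing v with
  | nil => rw [h.1.nil_eq]
  | cons a u ih =>
    obtain ⟨p, s, rfl, -, hp, hu⟩ := h.exists_eq_append_cons hsym
    rw [ofList_append_cons hp, ofList_cons, ih hu]

theorem exists_eq_append_cons_of_of_mul_eq (hsym : Symmetric I) {a : α} {x : TraceMonoid α I}
    {v : List α} (h : of I a * x = ofList I v) :
    ∃ p s, v = p ++ a :: s ∧ a ∉ p ∧ (∀ z ∈ p, I z a) ∧ x = ofList I (p ++ s) := by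
  obtain ⟨u, rfl⟩ := ofList_surjective x
  have hu : WordEquiv I (a :: u) v := WordEquiv.of_ofList_eq hsym (by rw [ofList_cons, h])
  obtain ⟨p, s, rfl, ha, hp, hu⟩ := hu.exists_eq_append_cons hsym
  exact ⟨p, s, rfl, ha, hp, hu.ofList_eq hsym⟩

theorem of_mul_left_cancel (hsym : Symmetric I) {a : α} {x y : TraceMonoid α I}
    (h : of I a * x = of I a * y) : x = y := by
  obtain ⟨v, rfl⟩ := ofList_surjective y
  obtain ⟨_ | ⟨z, p⟩, s, hv, ha, -, rfl⟩ :=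
    exists_eq_append_cons_of_of_mul_eq hsym (h.trans (ofList_cons a v).symm)
  · obtain ⟨-, rfl⟩ := List.cons.inj hv
    rfl
  · exact absurd (List.cons.inj hv).1 fun h => ha (h ▸ List.mem_cons_self)

theorem mul_left_cancel (hsym : Symmetric I) {w x y : TraceMonoid α I} (h : w * x = w * y) :
    x = y := by
  obtain ⟨u, rfl⟩ := ofList_surjective w
  induction u with
  | nil => simpa [ofList_nil] using h
  | cons a u ih => exact ih (of_mul_left_cancel hsym (by simpa [ofList_cons, mul_assoc] using h))

theorem of_mul_eq_of_mul (hsym : Symmetric I) {a b : α} (hab : a ≠ b) {x y : TraceMonoid α I}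
    (h : of I a * x = of I b * y) : I a b ∧ ∃ w, x = of I b * w ∧ y = of I a * w := by
  obtain ⟨v, rfl⟩ := ofList_surjective y
  obtain ⟨_ | ⟨z, p⟩, s, hv, -, hp, rfl⟩ :=
    exists_eq_append_cons_of_of_mul_eq hsym (h.trans (ofList_cons b v).symm)
  · exact absurd (List.cons.inj hv).1.symm hab
  · obtain ⟨rfl, rfl⟩ := List.cons.inj hv
    exact ⟨hsym (hp b List.mem_cons_self), ofList I (p ++ s), ofList_cons b _,
      ofList_append_cons fun y hy => hp y (.tail _ hy)⟩

/-! ### Initial letters and products of cliques -/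

theorem exists_of_dvd_of_ne_one {t : TraceMonoid α I} (ht : t ≠ 1) : ∃ a, of I a ∣ t := by
  obtain ⟨_ | ⟨a, w⟩, rfl⟩ := ofList_surjective t
  · exact absurd ofList_nil ht
  · exact ⟨a, ofList I w, ofList_cons a w⟩

theorem mem_of_of_dvd_ofList (hsym : Symmetric I) {a : α} {w : List α}
    (h : of I a ∣ ofList I w) : a ∈ w := by
  obtain ⟨x, hx⟩ := h
  obtain ⟨p, s, rfl, -⟩ := exists_eq_append_cons_of_of_mul_eq hsym hx.symm
  exact List.mem_append_cons_self

theorem exists_isLeast_of_dvd [LinearOrder α] (hsym : Symmetric I) {t : TraceMonoid α I}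
    (ht : t ≠ 1) : ∃ b, IsLeast {a | of I a ∣ t} b := by
  obtain ⟨w, rfl⟩ := ofList_surjective t
  obtain ⟨b, hb, hmin⟩ := Set.exists_min_image {a | of I a ∣ ofList I w} id
    (w.finite_toSet.subset fun _ => mem_of_of_dvd_ofList hsym) (exists_of_dvd_of_ne_one ht)
  exact ⟨b, hb, hmin⟩

theorem rel_of_of_dvd (hsym : Symmetric I) {a b : α} {t : TraceMonoid α I} (ha : of I a ∣ t)
    (hb : of I b ∣ t) (hab : a ≠ b) : I a b := by
  obtain ⟨x, rfl⟩ := ha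
  obtain ⟨y, hy⟩ := hb
  exact (of_mul_eq_of_mul hsym hab hy).1

theorem of_dvd_of_of_dvd_of_mul (hsym : Symmetric I) {a b : α} (hab : a ≠ b)
    {u : TraceMonoid α I} (h : of I b ∣ of I a * u) : of I b ∣ u := by
  obtain ⟨y, hy⟩ := h
  obtain ⟨-, w, hw, -⟩ := of_mul_eq_of_mul hsym hab hy
  exact ⟨w, hw⟩

def cliqueProd (s : Finset α) (hs : (s : Set α).Pairwise I) : TraceMonoid α I :=
  s.noncommProd (of I) fun _ ha _ hb hab => of_commute (hs ha hb hab)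

theorem cliqueProd_insert [DecidableEq α] {s : Finset α} {a : α} (ha : a ∉ s)
    (hs : (↑(insert a s) : Set α).Pairwise I) :
    cliqueProd (insert a s) hs = of I a * cliqueProd s (hs.mono (by simp)) :=
  Finset.noncommProd_insert_of_notMem _ _ _ _ ha

theorem cliqueProd_erase_mul [DecidableEq α] {s : Finset α} {a : α} (ha : a ∈ s)
    (hs : (s : Set α).Pairwise I) :
    cliqueProd (s.erase a) (hs.mono (by simp)) * of I a = cliqueProd s hs :=
  Finset.noncommProd_erase_mul _ ha _ _

theorem of_dvd_cliqueProd {s : Finset α} {a : α} (ha : a ∈ s) (hs : (s : Set α).Pairwise I) :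
    of I a ∣ cliqueProd s hs :=
  ⟨_, (Finset.mul_noncommProd_erase _ ha _ _).symm⟩

theorem length_cliqueProd {s : Finset α} (hs : (s : Set α).Pairwise I) :
    length (cliqueProd s hs) = s.card := by
  induction s using Finset.induction_on with
  | empty => rfl
  | insert a s ha ih => rw [cliqueProd_insert ha, length_mul, length_of, ih,
      Finset.card_insert_of_notMem ha, add_comm]

theorem cliqueProd_dvd [DecidableEq α] (hsym : Symmetric I) {s : Finset α}
    (hs : (s : Set α).Pairwise I) {t : TraceMonoid α I} (h : ∀ a ∈ s, of I a ∣ t) :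
    cliqueProd s hs ∣ t := by
  induction s using Finset.induction_on generalizing t with
  | empty => exact ⟨t, (one_mul t).symm⟩
  | insert a s ha ih =>
    obtain ⟨u, rfl⟩ := h a (Finset.mem_insert_self a s)
    rw [cliqueProd_insert ha]
    exact mul_dvd_mul_left _ <| ih _ fun b hb => of_dvd_of_of_dvd_of_mul hsym
      (ne_of_mem_of_not_mem hb ha).symm (h b (Finset.mem_insert_of_mem hb))

end TraceMonoid

theorem Finset.sum_sum_erase_eq_zero {ι β : Type*} [DecidableEq ι] [AddCommGroup β]
    (s : Finset ι) (f : ι → ι → β)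
    (hf : ∀ a ∈ s, ∀ b ∈ s, a ≠ b → f a b = -f b a) :
    ∑ a ∈ s, ∑ b ∈ s.erase a, f a b = 0 := by
  rw [Finset.sum_sigma']
  refine Finset.sum_involution (fun p _ => ⟨p.2, p.1⟩) (fun p hp => ?_) (fun p hp _ h => ?_)
    (fun p hp => ?_) (fun _ _ => rfl)
  · obtain ⟨ha, hb⟩ := Finset.mem_sigma.1 hp
    rw [hf _ ha _ (Finset.mem_of_mem_erase hb) (Finset.ne_of_mem_erase hb).symm, neg_add_cancel]
  · obtain ⟨-, hb⟩ := Finset.mem_sigma.1 hp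
    exact Finset.ne_of_mem_erase hb (congrArg Sigma.fst h)
  · obtain ⟨ha, hb⟩ := Finset.mem_sigma.1 hp
    exact Finset.mem_sigma.2 ⟨Finset.mem_of_mem_erase hb,
      Finset.mem_erase.2 ⟨(Finset.ne_of_mem_erase hb).symm, ha⟩⟩

open TraceMonoid

section Cells

variable {σ : Type*} {I : σ → σ → Prop} {k : ℕ}

namespace Clique

def prod (c : Clique I k) : TraceMonoid σ I := cliqueProd c.1 c.2.2

theorem length_prod (c : Clique I k) : length c.prod = k :=
  (length_cliqueProd _).trans c.2.1

theorem of_dvd_prod_mul (c : Clique I k) {a : σ} (ha : a ∈ c.1) (t : TraceMonoid σ I) :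
    of I a ∣ c.prod * t :=
  (of_dvd_cliqueProd ha _).mul_right t

def singleton (I : σ → σ → Prop) (a : σ) : Clique I 1 :=
  ⟨{a}, Finset.card_singleton a, by simp⟩

theorem eq_emptyClique (c : Clique I 0) : c = emptyClique I :=
  Subtype.ext (Finset.card_eq_zero.1 c.2.1)

end Clique

theorem gen_sub_one_commute {a b : σ} (h : I a b) : Commute (gen I a - 1) (gen I b - 1) :=
  (((of_commute h).map (MonoidAlgebra.of ℤ _)).sub_right (Commute.one_right _)).sub_left
    (Commute.one_left _)

namespace Resolution

/-- The basis element `[c]·t` of `F_k` over `ℤ`. -/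
def cell (c : Clique I k) (t : TraceMonoid σ I) : F I k :=
  Finsupp.single c (MonoidAlgebra.single t 1)

def cellBasis (I : σ → σ → Prop) (k : ℕ) : Module.Basis (Σ _ : Clique I k, TraceMonoid σ I) ℤ (F I k) :=
  Finsupp.basis fun _ => MonoidAlgebra.basis _ ℤ

theorem cellBasis_apply (i : Σ _ : Clique I k, TraceMonoid σ I) :
    cellBasis I k i = cell i.1 i.2 := by
  simp [cellBasis, cell]

theorem map_mem_of_forall_cell {N : Type*} [AddCommGroup N] (f : F I k →ₗ[ℤ] N)
    (p : Submodule ℤ N) (h : ∀ c t, f (cell c t) ∈ p) (x : F I k) : f x ∈ p :=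
  (Submodule.span_le (p := p.comap f)).2
    (by rintro _ ⟨i, rfl⟩; simpa [cellBasis_apply] using h i.1 i.2) ((cellBasis I k).mem_span x)

def filtration (I : σ → σ → Prop) (k n : ℕ) : Submodule ℤ (F I k) :=
  Submodule.span ℤ {x | ∃ c t, length t < n ∧ cell c t = x}

theorem cell_mem_filtration (c : Clique I k) {t : TraceMonoid σ I} {n : ℕ} (ht : length t < n) :
    cell c t ∈ filtration I k n :=
  Submodule.subset_span ⟨c, t, ht, rfl⟩

theorem map_mem_filtration {k' n n' : ℕ} (f : F I k →ₗ[ℤ] F I k')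
    (hf : ∀ c t, length t < n → f (cell c t) ∈ filtration I k' n') {x : F I k}
    (hx : x ∈ filtration I k n) : f x ∈ filtration I k' n' :=
  (Submodule.span_le (p := (filtration I k' n').comap f)).2
    (by rintro _ ⟨c, t, ht, rfl⟩; exact hf c t ht) hx

theorem filtration_zero : filtration I k 0 = ⊥ := by
  simp [filtration]

theorem exists_mem_filtration (x : F I k) : ∃ n, x ∈ filtration I k n := by
  have hmono : Monotone (filtration I k) := fun n m hnm =>
    Submodule.span_mono fun _ ⟨c, t, ht, hx⟩ => ⟨c, t, ht.trans_le hnm, hx⟩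
  have htop : ⨆ n, filtration I k n = ⊤ := by
    refine eq_top_iff.2 ((cellBasis I k).span_eq.symm.le.trans (Submodule.span_le.2 ?_))
    rintro _ ⟨i, rfl⟩
    rw [SetLike.mem_coe, cellBasis_apply]
    exact Submodule.mem_iSup_of_mem (length i.2 + 1) (cell_mem_filtration _ (Nat.lt_succ_self _))
  exact (Submodule.mem_iSup_of_directed _ hmono.directed_le).1 (htop ▸ Submodule.mem_top)

theorem aug_cell (c : Clique I 0) (t : TraceMonoid σ I) : aug I (cell c t) = 1 := by
  rw [Clique.eq_emptyClique c, aug, cell, Finsupp.single_eq_same, MonoidAlgebra.lift_single]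
  simp

def augLinear (I : σ → σ → Prop) : F I 0 →ₗ[ℤ] ℤ :=
  (MonoidAlgebra.lift ℤ ℤ (TraceMonoid σ I) 1).toLinearMap ∘ₗ
    Finsupp.lapply (emptyClique I)

theorem augLinear_apply (x : F I 0) : augLinear I x = aug I x := rfl

theorem aug_surjective : Function.Surjective (aug I) := fun z =>
  ⟨z • cell (emptyClique I) 1, by
    rw [← augLinear_apply, map_zsmul, augLinear_apply, aug_cell, smul_eq_mul, mul_one]⟩

end Resolution

end Cells

variable {σ : Type*} [LinearOrder σ] {I : σ → σ → Prop} {k : ℕ}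

theorem Clique.prod_erased_mul (c : Clique I (k + 1)) (j : Fin (k + 1)) (t : TraceMonoid σ I) :
    (erased c j).prod * (of I (elt c j) * t) = c.prod * t := by
  rw [← mul_assoc, Clique.prod, Clique.prod, ← cliqueProd_erase_mul (elt_mem c j) c.2.2]
  rfl

theorem elt_injective (c : Clique I k) : Function.Injective (elt c) :=
  (c.1.orderEmbOfFin c.2.1).injective

theorem elt_zero_eq {c : Clique I (k + 1)} {b : σ} (hb : b ∈ c.1) (h : ∀ x ∈ c.1, b ≤ x) :
    elt c 0 = b :=
  (Finset.orderEmbOfFin_zero c.2.1 k.succ_pos).trans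
    (le_antisymm (Finset.min'_le _ _ hb) (h _ (Finset.min'_mem _ _)))

theorem elt_eq_cons {c : Clique I k} {d : Clique I (k + 1)} {b : σ} (hd : d.1 = insert b c.1)
    (h : ∀ x ∈ c.1, b < x) : elt d = Fin.cons b (elt c) := by
  have hmono : StrictMono (Fin.cons b (elt c) : Fin (k + 1) → σ) :=
    Fin.strictMono_cons.2 ⟨fun j => h _ (elt_mem c j), (c.1.orderEmbOfFin c.2.1).strictMono⟩
  refine (Finset.orderEmbOfFin_unique d.2.1 (fun j => ?_) hmono).symm
  rw [hd]
  refine Fin.cases ?_ (fun j => ?_) j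
  · exact Finset.mem_insert_self b c.1
  · exact Finset.mem_insert_of_mem (elt_mem c j)

theorem elt_singleton (a : σ) : elt (Clique.singleton I a) 0 = a :=
  Finset.mem_singleton.1 (elt_mem (Clique.singleton I a) 0 : elt _ 0 ∈ ({a} : Finset σ))

theorem sum_elt {β : Type*} [AddCommMonoid β] (c : Clique I k) (f : σ → β) :
    ∑ j, f (elt c j) = ∑ a ∈ c.1, f a := by
  rw [← Finset.map_orderEmbOfFin_univ c.1 c.2.1, Finset.sum_map]
  rfl

namespace Resolution

theorem del_single (c : Clique I (k + 1)) (r : RM σ I) :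
    del I k (Finsupp.single c r) =
      ∑ j : Fin (k + 1),
        Finsupp.single (erased c j) ((-1 : ℤ) ^ (j : ℕ) • ((gen I (elt c j) - 1) * r)) := by
  rw [del, Finsupp.lsum_single, LinearMap.sum_apply]
  refine Finset.sum_congr rfl fun j _ => ?_
  simp [Int.cast_pow]

theorem del_cell (c : Clique I (k + 1)) (t : TraceMonoid σ I) :
    del I k (cell c t) = ∑ j : Fin (k + 1), (-1 : ℤ) ^ (j : ℕ) •
      (cell (erased c j) (of I (elt c j) * t) - cell (erased c j) t) := by
  rw [cell, del_single]
  refine Finset.sum_congr rfl fun j _ => ?_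
  rw [sub_mul, one_mul, gen, MonoidAlgebra.of_apply, MonoidAlgebra.single_mul_single, one_mul,
    cell, cell, ← Finsupp.single_sub, Finsupp.smul_single]
  rfl

/-! ### `δ ∘ δ = 0` -/

def sign (s : Finset σ) (a : σ) : ℤ := (-1) ^ (s.filter (· < a)).card

theorem sign_elt (c : Clique I k) (j : Fin k) : sign c.1 (elt c j) = (-1) ^ (j : ℕ) := by
  have : c.1.filter (· < elt c j) = (Finset.Iio j).map (c.1.orderEmbOfFin c.2.1).toEmbedding := by
    ext x
    simp only [Finset.mem_filter, Finset.mem_map, Finset.mem_Iio, RelEmbedding.coe_toEmbedding]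
    constructor
    · rintro ⟨hx, hlt⟩
      obtain ⟨i, rfl⟩ : x ∈ Set.range (c.1.orderEmbOfFin c.2.1) := by
        rw [Finset.range_orderEmbOfFin]; exact hx
      exact ⟨i, (OrderEmbedding.lt_iff_lt _).1 hlt, rfl⟩
    · rintro ⟨i, hi, rfl⟩
      exact ⟨Finset.orderEmbOfFin_mem _ _ _, (OrderEmbedding.lt_iff_lt _).2 hi⟩
  rw [sign, this, Finset.card_map, Fin.card_Iio]

theorem sign_mul_sign_erase {s : Finset σ} {a b : σ} (ha : a ∈ s) (hb : b ∈ s)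
    (hab : a ≠ b) :
    sign s a * sign (s.erase a) b = -(sign s b * sign (s.erase b) a) := by
  wlog h : a < b generalizing a b
  · rw [this hb ha hab.symm ((lt_or_gt_of_ne hab).resolve_left h), neg_neg]
  have hmem : a ∈ s.filter (· < b) := Finset.mem_filter.2 ⟨ha, h⟩
  have h1 : (s.erase a).filter (· < b) = (s.filter (· < b)).erase a := Finset.filter_erase _ _ _
  have h2 : (s.erase b).filter (· < a) = s.filter (· < a) := by
    rw [Finset.filter_erase,
      Finset.erase_eq_of_notMem fun h' => (Finset.mem_filter.1 h').2.not_gt h]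
  rw [sign, sign, sign, sign, h1, h2, Finset.card_erase_of_mem hmem]
  obtain ⟨n, hn⟩ := Nat.exists_eq_add_of_lt (Finset.card_pos.2 ⟨a, hmem⟩)
  rw [hn, Nat.add_sub_cancel, pow_succ]
  ring

/-- Indexing by the underlying sets makes the faces of faces independent of proofs. -/
def forgetClique (I : σ → σ → Prop) (k : ℕ) : F I k →ₗ[ℤ] Finset σ →₀ RM σ I :=
  Finsupp.lmapDomain (RM σ I) ℤ fun c : Clique I k => c.1

omit [LinearOrder σ] in
theorem forgetClique_injective : Function.Injective (forgetClique I k) :=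
  Finsupp.mapDomain_injective Subtype.val_injective

theorem forgetClique_del_single (c : Clique I (k + 1)) (r : RM σ I) :
    forgetClique I k (del I k (Finsupp.single c r)) =
      ∑ a ∈ c.1, Finsupp.single (c.1.erase a) (sign c.1 a • ((gen I a - 1) * r)) := by
  rw [del_single, map_sum,
    ← sum_elt c fun a => Finsupp.single (c.1.erase a) (sign c.1 a • ((gen I a - 1) * r))]
  simp only [forgetClique, Finsupp.lmapDomain_apply, Finsupp.mapDomain_single, sign_elt]
  rfl

theorem del_del (x : F I (k + 2)) : del I k (del I (k + 1) x) = 0 := by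
  induction x using Finsupp.induction_linear with
  | zero => simp
  | add x y hx hy => simp [hx, hy]
  | single c r =>
    refine forgetClique_injective ?_
    rw [map_zero, del_single, map_sum, map_sum]
    simp only [forgetClique_del_single, ← sign_elt c]
    refine (sum_elt c fun a => ∑ b ∈ c.1.erase a, Finsupp.single ((c.1.erase a).erase b)
      (sign (c.1.erase a) b • ((gen I b - 1) * (sign c.1 a • ((gen I a - 1) * r))))).trans
      (Finset.sum_sum_erase_eq_zero _ _ fun a ha b hb hab => ?_)
    rw [Finset.erase_right_comm, ← Finsupp.single_neg]
    congr 1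
    simp only [mul_smul_comm, smul_smul, ← mul_assoc,
      (gen_sub_one_commute (c.2.2 hb ha hab.symm)).eq]
    rw [← neg_smul, mul_comm (sign _ _), sign_mul_sign_erase ha hb hab, mul_comm (sign _ _)]

/-! ### The contracting homotopy -/

def lead (I : σ → σ → Prop) (k : ℕ) : F I (k + 1) →ₗ[ℤ] F I k :=
  (cellBasis I (k + 1)).constr ℤ fun i =>
    ∑ j : Fin (k + 1), (-1 : ℤ) ^ (j : ℕ) • cell (erased i.1 j) (of I (elt i.1 j) * i.2)

def low (I : σ → σ → Prop) (k : ℕ) : F I (k + 1) →ₗ[ℤ] F I k :=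
  (cellBasis I (k + 1)).constr ℤ fun i =>
    ∑ j : Fin (k + 1), (-1 : ℤ) ^ (j : ℕ) • cell (erased i.1 j) i.2

theorem lead_cell (c : Clique I (k + 1)) (t : TraceMonoid σ I) :
    lead I k (cell c t) =
      ∑ j : Fin (k + 1), (-1 : ℤ) ^ (j : ℕ) • cell (erased c j) (of I (elt c j) * t) := by
  rw [← cellBasis_apply ⟨c, t⟩, lead, Module.Basis.constr_basis]

theorem low_cell (c : Clique I (k + 1)) (t : TraceMonoid σ I) :
    low I k (cell c t) = ∑ j : Fin (k + 1), (-1 : ℤ) ^ (j : ℕ) • cell (erased c j) t := by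
  rw [← cellBasis_apply ⟨c, t⟩, low, Module.Basis.constr_basis]

theorem del_eq_lead_sub_low (x : F I (k + 1)) : del I k x = lead I k x - low I k x := by
  suffices (del I k).restrictScalars ℤ = lead I k - low I k from congrArg (· x) this
  refine (cellBasis I (k + 1)).ext fun i => ?_
  rw [cellBasis_apply, LinearMap.restrictScalars_apply, del_cell, LinearMap.sub_apply, lead_cell,
    low_cell, ← Finset.sum_sub_distrib]
  simp only [smul_sub]

theorem low_mem_filtration {n : ℕ} {x : F I (k + 1)} (hx : x ∈ filtration I (k + 1) n) :
    low I k x ∈ filtration I k n :=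
  map_mem_filtration _ (fun c t ht => by
    rw [low_cell]
    exact Submodule.sum_mem _ fun j _ => Submodule.smul_mem _ _ (cell_mem_filtration _ ht)) hx

/-- `h([c]·t) = [d]·m`, where `d = c ∪ {b}` for the least letter `b ∣ c·t`, provided `b ∉ c`,
and `c·t = d·m`; otherwise `h([c]·t) = 0`. -/
def homotopyCell (c : Clique I k) (t : TraceMonoid σ I) : F I (k + 1) :=
  if h : ∃ (d : Clique I (k + 1)) (m : TraceMonoid σ I) (b : σ), b ∉ c.1 ∧
      d.1 = insert b c.1 ∧ IsLeast {a | of I a ∣ c.prod * t} b ∧ c.prod * t = d.prod * m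
  then cell h.choose h.choose_spec.choose else 0

theorem homotopyCell_eq (hsym : Symmetric I) {c : Clique I k} {t : TraceMonoid σ I} {b : σ}
    (hb : IsLeast {a | of I a ∣ c.prod * t} b) (hbc : b ∉ c.1) {d : Clique I (k + 1)}
    {m : TraceMonoid σ I} (hd : d.1 = insert b c.1) (hm : c.prod * t = d.prod * m) :
    homotopyCell c t = cell d m := by
  unfold homotopyCell
  split_ifs with h
  · obtain ⟨b', -, hd', hb', hm'⟩ := h.choose_spec.choose_spec
    generalize h.choose_spec.choose = m' at hm' ⊢
    generalize h.choose = d' at hd' hm' ⊢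
    obtain rfl : d' = d := Subtype.ext (by rw [hd', hd, hb'.unique hb])
    rw [mul_left_cancel hsym (hm'.symm.trans hm)]
  · exact absurd ⟨d, m, b, hbc, hd, hb, hm⟩ h

theorem homotopyCell_eq_zero {c : Clique I k} {t : TraceMonoid σ I} {b : σ}
    (hb : IsLeast {a | of I a ∣ c.prod * t} b) (hbc : b ∈ c.1) : homotopyCell c t = 0 :=
  dif_neg fun ⟨_, _, _, hb'c, _, hb', _⟩ => hb'c (hb'.unique hb ▸ hbc)

theorem exists_insert_prod_mul_eq (hsym : Symmetric I) {c : Clique I k} {t : TraceMonoid σ I}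
    {b : σ} (hb : IsLeast {a | of I a ∣ c.prod * t} b) (hbc : b ∉ c.1) :
    ∃ (d : Clique I (k + 1)) (m : TraceMonoid σ I),
      d.1 = insert b c.1 ∧ c.prod * t = d.prod * m := by
  have hI : ∀ x ∈ (c.1 : Set σ), b ≠ x → I b x ∧ I x b := fun x hx hbx =>
    ⟨rel_of_of_dvd hsym hb.1 (c.of_dvd_prod_mul hx t) hbx,
      rel_of_of_dvd hsym (c.of_dvd_prod_mul hx t) hb.1 hbx.symm⟩
  let d : Clique I (k + 1) := ⟨insert b c.1, by rw [Finset.card_insert_of_notMem hbc, c.2.1],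
    by rw [Finset.coe_insert]; exact c.2.2.insert hI⟩
  obtain ⟨m, hm⟩ := cliqueProd_dvd hsym d.2.2 (t := c.prod * t) fun a ha => by
    rcases Finset.mem_insert.1 ha with rfl | ha
    · exact hb.1
    · exact c.of_dvd_prod_mul ha t
  exact ⟨d, m, rfl, hm⟩

theorem homotopyCell_mem_filtration {c : Clique I k} {t : TraceMonoid σ I} {n : ℕ}
    (ht : length t < n + 1) : homotopyCell c t ∈ filtration I (k + 1) n := by
  rw [homotopyCell]
  split_ifs with h
  · obtain ⟨-, -, -, -, hm⟩ := h.choose_spec.choose_spec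
    have := congrArg length hm
    rw [length_mul, length_mul, Clique.length_prod, Clique.length_prod] at this
    exact cell_mem_filtration _ (by omega)
  · exact zero_mem _

def homotopy (I : σ → σ → Prop) (k : ℕ) : F I k →ₗ[ℤ] F I (k + 1) :=
  (cellBasis I k).constr ℤ fun i => homotopyCell i.1 i.2

theorem homotopy_cell (c : Clique I k) (t : TraceMonoid σ I) :
    homotopy I k (cell c t) = homotopyCell c t := by
  rw [← cellBasis_apply ⟨c, t⟩, homotopy, Module.Basis.constr_basis]

theorem homotopy_mem_filtration {n : ℕ} {x : F I k} (hx : x ∈ filtration I k (n + 1)) :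
    homotopy I k x ∈ filtration I (k + 1) n :=
  map_mem_filtration _ (fun c t ht => by
    rw [homotopy_cell]; exact homotopyCell_mem_filtration ht) hx

theorem isLeast_erased_prod_mul {c : Clique I (k + 1)} {t : TraceMonoid σ I} {b : σ}
    (hb : IsLeast {a | of I a ∣ c.prod * t} b) (j : Fin (k + 1)) :
    IsLeast {a | of I a ∣ (erased c j).prod * (of I (elt c j) * t)} b := by
  rwa [Clique.prod_erased_mul]

/-- When the least letter `b` lies in `c`, it is the first letter of `c`, and only the face
deleting it survives `h`. -/
theorem homotopy_lead_cell_of_mem (hsym : Symmetric I) {c : Clique I (k + 1)}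
    {t : TraceMonoid σ I} {b : σ} (hb : IsLeast {a | of I a ∣ c.prod * t} b) (hbc : b ∈ c.1) :
    homotopy I k (lead I k (cell c t)) = cell c t := by
  have h0 : elt c 0 = b := elt_zero_eq hbc fun x hx => hb.2 (c.of_dvd_prod_mul hx t)
  simp only [lead_cell, map_sum, map_zsmul, homotopy_cell]
  rw [Fin.sum_univ_succ, Finset.sum_eq_zero fun j _ => ?_, add_zero]
  · rw [homotopyCell_eq hsym (isLeast_erased_prod_mul hb 0) (by simp [erased, h0]) (d := c)
      (m := t) (by simp [erased, h0, Finset.insert_erase hbc]) (Clique.prod_erased_mul c 0 t)]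
    simp
  · rw [homotopyCell_eq_zero (isLeast_erased_prod_mul hb j.succ), smul_zero]
    refine Finset.mem_erase.2 ⟨?_, hbc⟩
    rw [← h0]
    exact (elt_injective c).ne (Fin.succ_ne_zero j).symm

/-- When `b ∉ c`, `h([c]·t) = [c ∪ {b}]·m` with `b` first in `c ∪ {b}`: the face of `[c ∪ {b}]·m`
deleting `b` is `[c]·t`, and the others cancel against `h` of the faces of `[c]·t`. -/
theorem lead_homotopy_add_homotopy_lead_cell_of_not_mem (hsym : Symmetric I)
    {c : Clique I (k + 1)} {t : TraceMonoid σ I} {b : σ}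
    (hb : IsLeast {a | of I a ∣ c.prod * t} b) (hbc : b ∉ c.1) :
    lead I (k + 1) (homotopy I (k + 1) (cell c t)) + homotopy I k (lead I k (cell c t)) =
      cell c t := by
  obtain ⟨d, m, hd, hm⟩ := exists_insert_prod_mul_eq hsym hb hbc
  have hlt : ∀ x ∈ c.1, b < x := fun x hx =>
    (hb.2 (c.of_dvd_prod_mul hx t)).lt_of_ne fun h => hbc (h ▸ hx)
  have hdelt := elt_eq_cons hd hlt
  have hsucc : ∀ j : Fin (k + 1), elt d j.succ = elt c j := fun j => by rw [hdelt, Fin.cons_succ]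
  have hd0 : erased d 0 = c := Subtype.ext <| by
    simp only [erased, hdelt, Fin.cons_zero, hd, Finset.erase_insert hbc]
  have hbm : of I b * m = t := mul_left_cancel hsym (w := c.prod) <| by
    rw [hm, ← Clique.prod_erased_mul d 0 m, hd0, hdelt, Fin.cons_zero]
  simp only [lead_cell, map_sum, map_zsmul, homotopy_cell]
  rw [homotopyCell_eq hsym hb hbc hd hm, lead_cell, Fin.sum_univ_succ, add_assoc,
    ← Finset.sum_add_distrib, Finset.sum_eq_zero fun j _ => ?_, add_zero]
  · rw [hd0, hdelt, Fin.cons_zero, hbm]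
    simp
  · have hbj : b ∉ (erased c j).1 := fun h => hbc (Finset.mem_of_mem_erase h)
    rw [homotopyCell_eq hsym (isLeast_erased_prod_mul hb j) hbj (d := erased d j.succ)
      (m := of I (elt c j) * m)]
    · rw [hsucc, Fin.val_succ, pow_succ]
      simp
    · simp only [erased, hsucc, hd]
      exact Finset.erase_insert_of_ne (hlt _ (elt_mem c j)).ne
    · rw [Clique.prod_erased_mul, hm, ← Clique.prod_erased_mul d j.succ m, hsucc]

theorem lead_homotopy_add_homotopy_lead (hsym : Symmetric I) (x : F I (k + 1)) :
    lead I (k + 1) (homotopy I (k + 1) x) + homotopy I k (lead I k x) = x := by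
  suffices h : lead I (k + 1) ∘ₗ homotopy I (k + 1) + homotopy I k ∘ₗ lead I k = .id from
    LinearMap.congr_fun h x
  refine (cellBasis I (k + 1)).ext fun ⟨c, t⟩ => ?_
  rw [cellBasis_apply]
  have hct : c.prod * t ≠ 1 := fun h => by
    simpa [length_mul, length_one, Clique.length_prod] using congrArg length h
  obtain ⟨b, hb⟩ := exists_isLeast_of_dvd hsym hct
  by_cases hbc : b ∈ c.1
  · simp only [LinearMap.add_apply, LinearMap.comp_apply, homotopy_cell,
      homotopyCell_eq_zero hb hbc, map_zero, zero_add, homotopy_lead_cell_of_mem hsym hb hbc,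
      LinearMap.id_apply]
  · exact lead_homotopy_add_homotopy_lead_cell_of_not_mem hsym hb hbc

/-! ### Exactness -/

/-- For a cycle `x`, `x - δ(h x) = h(low x) + low(h x)` has shorter coefficients. -/
theorem exact_del_del (hsym : Symmetric I) (k : ℕ) :
    Function.Exact (del I (k + 1)) (del I k) := by
  refine fun x => ⟨fun hx => ?_, by rintro ⟨y, rfl⟩; exact del_del y⟩
  obtain ⟨n, hn⟩ := exists_mem_filtration x
  induction n generalizing x with
  | zero =>
    rw [filtration_zero, Submodule.mem_bot] at hn
    exact ⟨0, by rw [hn, map_zero]⟩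
  | succ n ih =>
    set y := homotopy I (k + 1) x
    have hcycle : lead I k x = low I k x :=
      sub_eq_zero.1 ((del_eq_lead_sub_low x).symm.trans hx)
    have hrest : x - del I (k + 1) y = homotopy I k (low I k x) + low I (k + 1) y := by
      rw [del_eq_lead_sub_low, ← hcycle]
      nth_rw 1 [← lead_homotopy_add_homotopy_lead hsym x]
      abel
    have hmem : x - del I (k + 1) y ∈ filtration I (k + 1) n := by
      rw [hrest]
      exact add_mem (homotopy_mem_filtration (low_mem_filtration hn))
        (low_mem_filtration (homotopy_mem_filtration hn))
    obtain ⟨z, hz⟩ := ih (x - del I (k + 1) y) (by rw [map_sub, hx, del_del, sub_zero]) hmem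
    exact ⟨y + z, by rw [map_add, hz, add_sub_cancel]⟩

theorem aug_del (y : F I 1) : aug I (del I 0 y) = 0 := by
  rw [← augLinear_apply]
  refine map_mem_of_forall_cell (augLinear I ∘ₗ (del I 0).restrictScalars ℤ) ⊥
    (fun c t => ?_) y
  simp only [LinearMap.comp_apply, LinearMap.restrictScalars_apply, del_cell, map_sum, map_zsmul,
    map_sub, augLinear_apply, aug_cell, sub_self, smul_zero, Finset.sum_const_zero]
  exact zero_mem _

theorem del_cell_singleton (a : σ) (t : TraceMonoid σ I) :
    del I 0 (cell (Clique.singleton I a) t) =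
      cell (emptyClique I) (of I a * t) - cell (emptyClique I) t := by
  rw [del_cell, Fin.sum_univ_one, elt_singleton, Clique.eq_emptyClique (erased _ 0)]
  simp

theorem cell_sub_cell_one_mem_range (t : TraceMonoid σ I) :
    cell (emptyClique I) t - cell (emptyClique I) 1 ∈ LinearMap.range (del I 0) := by
  obtain ⟨w, rfl⟩ := ofList_surjective t
  induction w with
  | nil => rw [ofList_nil, sub_self]; exact zero_mem _
  | cons a w ih =>
    have := add_mem (LinearMap.mem_range_self _ (cell (Clique.singleton I a) (ofList I w))) ih
    rwa [del_cell_singleton, sub_add_sub_cancel, ← ofList_cons] at this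

theorem exact_del_aug : Function.Exact (del I 0) (aug I) := by
  refine fun x => ⟨fun hx => ?_, by rintro ⟨y, rfl⟩; exact aug_del y⟩
  have key := map_mem_of_forall_cell
    (LinearMap.id - LinearMap.toSpanSingleton ℤ _ (cell (emptyClique I) 1) ∘ₗ augLinear I)
    ((LinearMap.range (del I 0)).restrictScalars ℤ) (fun c t => ?_) x
  · simpa [augLinear_apply, hx] using key
  · simpa [augLinear_apply, aug_cell, Clique.eq_emptyClique c] using cell_sub_cell_one_mem_range t

end Resolution

end

theorem resolution_exact_general {σ : Type*} [LinearOrder σ] (I : σ → σ → Prop)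
    (hsym : Symmetric I) :
    Function.Surjective (aug I) ∧ Function.Exact (del I 0) (aug I) ∧
      ∀ k : ℕ, Function.Exact (del I (k + 1)) (del I k) :=
  ⟨Resolution.aug_surjective, Resolution.exact_del_aug, Resolution.exact_del_del hsym⟩

/-- **Theorem 2.3.** For a free partially commutative monoid `M = M(Σ, I)` with `Σ`
finite and totally ordered, the sequence
`⋯ → F_n →^{δ_n} ⋯ → F_1 →^{δ_1} F_0 = ℤM →^{ε} ℤ → 0`
is exact, i.e. it is a free resolution of the trivial right `ℤM`-module `ℤ`. -/
theorem resolution_exact {σ : Type*} [Fintype σ] [LinearOrder σ] (I : σ → σ → Prop)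
    (hsym : Symmetric I) (hirr : Irreflexive I) :
    Function.Surjective (aug I) ∧ Function.Exact (del I 0) (aug I) ∧
      ∀ k : ℕ, Function.Exact (del I (k + 1)) (del I k) :=
  resolution_exact_general I hsym
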